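/- arXiv:1803.05668 — 3 statements merged into one kernel-verified Lean document; each statement's English description precedes it below -/
import Mathlib

section
/- For all real numbers s and t, the quantity A(s,t) := cosh(t) - cosh(s) + s·sinh(s) - t·sinh(s) satisfies (t-s)²/2 ≤ A(s,t) ≤ (sinh(t) - sinh(s))²/2. -/
/-!
Both bounds compare two functions of `t` that agree at `t = s`: the difference has derivative
with the sign of `t - s`, so it is minimal at `s`. For the lower bound that derivative is
`(sinh t - t) - (sinh s - s)`; for the upper bound it is `(sinh t - sinh s) (cosh t - 1)`.
-/

open Real Set

theorem le_of_forall_sub_mul_deriv_nonneg {f f' : ℝ → ℝ} {s : ℝ}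
    (hf : ∀ u, HasDerivAt f (f' u) u) (hf' : ∀ u, 0 ≤ (u - s) * f' u) (t : ℝ) : f s ≤ f t := by
  have hcont : Continuous f := continuous_iff_continuousAt.2 fun u ↦ (hf u).continuousAt
  rcases le_total s t with hst | hts
  · refine monotoneOn_of_hasDerivWithinAt_nonneg (convex_Icc s t) hcont.continuousOn
      (fun u _ ↦ (hf u).hasDerivWithinAt) (fun u hu ↦ ?_) (left_mem_Icc.2 hst)
      (right_mem_Icc.2 hst) hst
    rw [interior_Icc] at hu
    exact nonneg_of_mul_nonneg_right (hf' u) (sub_pos.2 hu.1)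
  · refine antitoneOn_of_hasDerivWithinAt_nonpos (convex_Icc t s) hcont.continuousOn
      (fun u _ ↦ (hf u).hasDerivWithinAt) (fun u hu ↦ ?_) (left_mem_Icc.2 hts)
      (right_mem_Icc.2 hts) hts
    rw [interior_Icc] at hu
    exact nonpos_of_mul_nonneg_right (hf' u) (sub_neg.2 hu.2)

theorem Monotone.sub_mul_sub_nonneg {g : ℝ → ℝ} (hg : Monotone g) (u s : ℝ) :
    0 ≤ (u - s) * (g u - g s) := by
  rcases le_total s u with h | h
  · exact mul_nonneg (sub_nonneg.2 h) (sub_nonneg.2 (hg h))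
  · exact mul_nonneg_of_nonpos_of_nonpos (sub_nonpos.2 h) (sub_nonpos.2 (hg h))

noncomputable def coshBregman (s t : ℝ) : ℝ := cosh t - cosh s - sinh s * (t - s)

theorem coshBregman_self (s : ℝ) : coshBregman s s = 0 := by
  simp [coshBregman]

theorem hasDerivAt_coshBregman (s t : ℝ) :
    HasDerivAt (coshBregman s) (sinh t - sinh s) t :=
  (((hasDerivAt_cosh t).sub_const (cosh s)).sub
    (((hasDerivAt_id t).sub_const s).const_mul (sinh s))).congr_deriv (by ring)

theorem sq_sub_div_two_le_coshBregman (s t : ℝ) : (t - s) ^ 2 / 2 ≤ coshBregman s t := by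
  have hderiv (u : ℝ) : HasDerivAt (fun u ↦ coshBregman s u - (u - s) ^ 2 / 2)
      ((sinh u - u) - (sinh s - s)) u := by
    refine ((hasDerivAt_coshBregman s u).sub
      ((((hasDerivAt_id u).sub_const s).pow 2).div_const 2)).congr_deriv ?_
    simp only [id, Nat.cast_ofNat]
    ring
  have := le_of_forall_sub_mul_deriv_nonneg hderiv
    (fun u ↦ sinh_sub_id_strictMono.monotone.sub_mul_sub_nonneg u s) t
  simp only [coshBregman_self, sub_self] at this
  linarith

theorem coshBregman_le_sq_sinh_sub (s t : ℝ) :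
    coshBregman s t ≤ (sinh t - sinh s) ^ 2 / 2 := by
  have hderiv (u : ℝ) : HasDerivAt (fun u ↦ (sinh u - sinh s) ^ 2 / 2 - coshBregman s u)
      ((sinh u - sinh s) * (cosh u - 1)) u := by
    refine (((((hasDerivAt_sinh u).sub_const (sinh s)).pow 2).div_const 2).sub
      (hasDerivAt_coshBregman s u)).congr_deriv ?_
    simp only [Nat.cast_ofNat]
    ring
  have hsign (u : ℝ) : 0 ≤ (u - s) * ((sinh u - sinh s) * (cosh u - 1)) := by
    rw [← mul_assoc]
    exact mul_nonneg (sinh_strictMono.monotone.sub_mul_sub_nonneg u s)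
      (sub_nonneg.2 (one_le_cosh u))
  have := le_of_forall_sub_mul_deriv_nonneg hderiv hsign t
  simp only [coshBregman_self, sub_self] at this
  linarith

theorem bregman_cosh_bounds (s t : ℝ) :
    (t - s) ^ 2 / 2 ≤ Real.cosh t - Real.cosh s + s * Real.sinh s - t * Real.sinh s ∧
    Real.cosh t - Real.cosh s + s * Real.sinh s - t * Real.sinh s ≤
      (Real.sinh t - Real.sinh s) ^ 2 / 2 := by
  have hA : cosh t - cosh s + s * sinh s - t * sinh s = coshBregman s t := by
    rw [coshBregman]; ring
  rw [hA]
  exact ⟨sq_sub_div_two_le_coshBregman s t, coshBregman_le_sq_sinh_sub s t⟩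
end

section
/- For all real s, (1/2)sinh²(s) - 1 + cosh(s) - s·sinh(s) ≥ 0, with minimum value 0. -/
/-! The function is even, vanishes at `0`, and its derivative `cosh s * (sinh s - s)` is
nonnegative for `s ≥ 0` because `s ≤ sinh s` there. -/

open Real Set

lemma hasDerivAt_half_sinh_sq_add_cosh_sub_mul_sinh (x : ℝ) :
    HasDerivAt (fun s => (1 / 2) * sinh s ^ 2 - 1 + cosh s - s * sinh s)
      (cosh x * (sinh x - x)) x := by
  have h := ((((hasDerivAt_sinh x).fun_pow 2).const_mul (1 / 2 : ℝ)).sub_const 1).fun_add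
    (hasDerivAt_cosh x) |>.fun_sub ((hasDerivAt_id' x).fun_mul (hasDerivAt_sinh x))
  exact h.congr_deriv (by push_cast; ring)

lemma monotoneOn_half_sinh_sq_add_cosh_sub_mul_sinh :
    MonotoneOn (fun s => (1 / 2) * sinh s ^ 2 - 1 + cosh s - s * sinh s) (Ici 0) := by
  have hderiv := hasDerivAt_half_sinh_sq_add_cosh_sub_mul_sinh
  refine monotoneOn_of_deriv_nonneg (convex_Ici 0)
    (fun x _ => (hderiv x).continuousAt.continuousWithinAt)
    (fun x _ => (hderiv x).differentiableAt.differentiableWithinAt) fun x hx => ?_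
  rw [(hderiv x).deriv]
  have hx : x ≤ sinh x := self_le_sinh_iff.mpr (interior_subset hx)
  exact mul_nonneg (cosh_pos x).le (sub_nonneg.mpr hx)

lemma half_sinh_sq_add_cosh_sub_mul_sinh_nonneg (s : ℝ) :
    0 ≤ (1 / 2) * sinh s ^ 2 - 1 + cosh s - s * sinh s := by
  wlog hs : 0 ≤ s generalizing s
  · simpa using this (-s) (by linarith)
  simpa using monotoneOn_half_sinh_sq_add_cosh_sub_mul_sinh self_mem_Ici hs hs

theorem sinh_sq_cosh_ineq :
    (∀ s : ℝ, 0 ≤ (1 / 2) * Real.sinh s ^ 2 - 1 + Real.cosh s - s * Real.sinh s) ∧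
    IsLeast (Set.range fun s : ℝ =>
      (1 / 2) * Real.sinh s ^ 2 - 1 + Real.cosh s - s * Real.sinh s) 0 :=
  ⟨half_sinh_sq_add_cosh_sub_mul_sinh_nonneg,
    ⟨0, by simp⟩, forall_mem_range.mpr half_sinh_sq_add_cosh_sub_mul_sinh_nonneg⟩
end

section
/- Let φ: [s₀, ∞) → ℝ be nonnegative and nonincreasing, and suppose there exist constants C > 0, α > 0 and β > 1 such that φ(h) ≤ C·φ(s)^β / (h - s)^α for all h > s ≥ s₀. Define e by e^α = C·φ(s₀)^(β-1)·2^(αβ/(β-1)). Then φ(s₀ + e) = 0. -/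
/-!
Put `μ = α / (β - 1)` and look at the levels `s₀ + e - e / 2 ^ k`, which increase to `s₀ + e`
with gaps `e / 2 ^ (k + 1)`. Feeding consecutive levels into the hypothesis, the choice of `e`
makes the bound `φ s₀ * 2 ^ (-k μ)` at level `k` reproduce itself at level `k + 1`. Since `φ` is
nonincreasing, `φ (s₀ + e)` lies below every such bound, which tends to `0`.
-/

open Filter Topology

namespace Stampacchia

noncomputable def level (s₀ e : ℝ) (k : ℕ) : ℝ := s₀ + e - e / 2 ^ k

variable {s₀ e : ℝ}

@[simp]
lemma level_zero : level s₀ e 0 = s₀ := by simp [level]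

lemma le_level (he : 0 ≤ e) (k : ℕ) : s₀ ≤ level s₀ e k := by
  have : e / 2 ^ k ≤ e := div_le_self he (one_le_pow₀ one_le_two)
  unfold level
  linarith

lemma level_le (he : 0 ≤ e) (k : ℕ) : level s₀ e k ≤ s₀ + e := by
  have : 0 ≤ e / 2 ^ k := by positivity
  unfold level
  linarith

lemma level_succ_sub_level (k : ℕ) : level s₀ e (k + 1) - level s₀ e k = e / 2 ^ (k + 1) := by
  unfold level
  field_simp
  ring

/-- This is the identity that dictates the value of `e`. -/
lemma bound_recurrence {A C α β : ℝ} (hA : 0 < A) (hC : 0 < C) (he : 0 < e) (hβ : 1 < β)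
    (heα : e ^ α = C * A ^ (β - 1) * 2 ^ (α * β / (β - 1))) (n : ℕ) :
    C * (A * 2 ^ (-(n * (α / (β - 1))))) ^ β / (e / 2 ^ (n + 1)) ^ α
      = A * 2 ^ (-((n + 1) * (α / (β - 1)))) := by
  have hβ1 : β - 1 ≠ 0 := by linarith
  rw [Real.mul_rpow hA.le (by positivity), Real.div_rpow he.le (by positivity), heα,
    ← Real.rpow_natCast, ← Real.rpow_mul zero_le_two, ← Real.rpow_mul zero_le_two,
    div_div_eq_mul_div, div_eq_iff (by positivity)]
  have hA_pow : A ^ β = A * A ^ (β - 1) := by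
    rw [← Real.rpow_one_add' hA.le (by linarith)]
    ring_nf
  have h_two_pow : (2 : ℝ) ^ (-(n * (α / (β - 1))) * β) * 2 ^ ((n + 1 : ℕ) * α)
      = 2 ^ (-((n + 1) * (α / (β - 1)))) * 2 ^ (α * β / (β - 1)) := by
    rw [← Real.rpow_add two_pos, ← Real.rpow_add two_pos]
    congr 1
    push_cast
    field_simp
    ring
  rw [hA_pow]
  linear_combination (C * A * A ^ (β - 1)) * h_two_pow

lemma apply_level_le {φ : ℝ → ℝ} {C α β : ℝ} (hC : 0 < C) (hβ : 1 < β)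
    (hnonneg : ∀ t, s₀ ≤ t → 0 ≤ φ t)
    (hineq : ∀ h s, s₀ ≤ s → s < h → φ h ≤ C * φ s ^ β / (h - s) ^ α)
    (hφ₀ : 0 < φ s₀) (he : 0 < e)
    (heα : e ^ α = C * φ s₀ ^ (β - 1) * 2 ^ (α * β / (β - 1))) (k : ℕ) :
    φ (level s₀ e k) ≤ φ s₀ * 2 ^ (-(k * (α / (β - 1)))) := by
  induction k with
  | zero => simp
  | succ k ih =>
    have hgap := level_succ_sub_level (s₀ := s₀) (e := e) k
    have hgap_pos : 0 < level s₀ e (k + 1) - level s₀ e k := by rw [hgap]; positivity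
    calc φ (level s₀ e (k + 1))
        ≤ C * φ (level s₀ e k) ^ β / (level s₀ e (k + 1) - level s₀ e k) ^ α :=
          hineq _ _ (le_level he.le k) (by linarith)
      _ ≤ C * (φ s₀ * 2 ^ (-(k * (α / (β - 1))))) ^ β / (e / 2 ^ (k + 1)) ^ α := by
          rw [hgap]
          gcongr
          exact hnonneg _ (le_level he.le k)
      _ = φ s₀ * 2 ^ (-((k + 1 : ℕ) * (α / (β - 1)))) := by
          rw [bound_recurrence hφ₀ hC he hβ heα, Nat.cast_succ]

end Stampacchia

open Stampacchia in
theorem stampacchia_iteration_lemma (φ : ℝ → ℝ) (s₀ C α β e : ℝ)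
    (hC : 0 < C) (hα : 0 < α) (hβ : 1 < β)
    (hnonneg : ∀ t, s₀ ≤ t → 0 ≤ φ t)
    (hmono : ∀ t₁ t₂, s₀ ≤ t₁ → t₁ ≤ t₂ → φ t₂ ≤ φ t₁)
    (hineq : ∀ h s, s₀ ≤ s → s < h → φ h ≤ C * φ s ^ β / (h - s) ^ α)
    (he0 : 0 ≤ e)
    (he : e ^ α = C * φ s₀ ^ (β - 1) * 2 ^ (α * β / (β - 1))) :
    φ (s₀ + e) = 0 := by
  refine le_antisymm ?_ (hnonneg _ (by linarith))
  rcases (hnonneg s₀ le_rfl).eq_or_lt with hφ₀ | hφ₀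
  · exact hφ₀ ▸ hmono _ _ le_rfl (by linarith)
  have he_pos : 0 < e := by
    refine he0.lt_of_ne ?_
    rintro rfl
    have : (0 : ℝ) < 0 ^ α := by rw [he]; positivity
    simp [Real.zero_rpow hα.ne'] at this
  set r : ℝ := 2 ^ (-(α / (β - 1)))
  have hr : r < 1 := Real.rpow_lt_one_of_one_lt_of_neg one_lt_two
    (neg_neg_of_pos (div_pos hα (by linarith)))
  have hbound (k : ℕ) : φ (s₀ + e) ≤ φ s₀ * r ^ k := by
    have hr_pow : r ^ k = 2 ^ (-(k * (α / (β - 1)))) := by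
      rw [← Real.rpow_natCast, ← Real.rpow_mul zero_le_two]
      ring_nf
    rw [hr_pow]
    exact (hmono _ _ (le_level he0 k) (level_le he0 k)).trans
      (apply_level_le hC hβ hnonneg hineq hφ₀ he_pos he k)
  have hlim : Tendsto (fun k : ℕ => φ s₀ * r ^ k) atTop (𝓝 0) := by
    simpa using (tendsto_pow_atTop_nhds_zero_of_lt_one (by positivity) hr).const_mul (φ s₀)
  exact ge_of_tendsto hlim (Eventually.of_forall hbound)
end
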